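/- Let Kl(T) be Cppo-enriched with least elements ⊥ in hom-sets, C have an initial object 0, and suppose ⊥ · f♯ = ⊥ for every f : X → Y in C. Then tr_α := μx.(x·α) = ⋁_{n∈ℕ} ⊥ · αⁿ defines a fixed point operator Hom_{Kl(T)}(X,X) → Hom_{Kl(T)}(X,0) (tr_α · α = tr_α) that is uniform with respect to ♯ : C → Kl(T): if h♯ · α = β · h♯ for h : X → Y in C, then tr_β · h♯ = tr_α. -/

import Mathlib

/-!
STATEMENT 16: Let `Kl(T)` be Cppo-enriched (hom-sets are pointed ω-cpos and composition
is ω-continuous on both sides), let `C` have an initial object `0`, and suppose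
`⊥ · f♯ = ⊥` for every `f : X ⟶ Y` in `C`.  Then `tr_α := μx.(x·α) = ⋁_{n∈ℕ} ⊥ · αⁿ`
defines a fixed point operator `Hom_{Kl(T)}(X,X) → Hom_{Kl(T)}(X,0)` (`tr_α · α = tr_α`,
and `tr_α` is the least fixed point of `x ↦ x·α`) that is uniform with respect to
`♯ : C → Kl(T)`: if `h♯ · α = β · h♯` for `h : X ⟶ Y` in `C`, then `tr_β · h♯ = tr_α`.
-/

open CategoryTheory CategoryTheory.Limits OmegaCompletePartialOrder

variable {C : Type*} [Category C] (T : Monad C)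

/-- An object of `C` viewed as an object of the Kleisli category of `T`. -/
def kObj (X : C) : Kleisli T := Kleisli.mk T X

variable [∀ X Y : Kleisli T, OmegaCompletePartialOrder (X ⟶ Y)]
  [∀ X Y : Kleisli T, OrderBot (X ⟶ Y)]

/-- The ascending chain `n ↦ ⊥ · αⁿ` in `Hom_{Kl(T)}(X, 0)` (note `⊥ · α⁰ = ⊥` and
`⊥ · αⁿ⁺¹ = (⊥ · αⁿ) · α`, i.e. `α ≫ (⊥ · αⁿ)` in diagrammatic order). -/
noncomputable def traceChain [HasInitial C]
    (hpost : ∀ {X Y Z : Kleisli T} (f : X ⟶ Y), Monotone (fun g : Y ⟶ Z => f ≫ g))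
    {X : Kleisli T} (α : X ⟶ X) : Chain (X ⟶ kObj T (⊥_ C)) :=
  ⟨fun n => (fun c => α ≫ c)^[n] (⊥ : X ⟶ kObj T (⊥_ C)), by
    apply monotone_nat_of_le_succ
    intro n
    induction n with
    | zero => exact bot_le
    | succ n ih => rw [Function.iterate_succ', Function.iterate_succ']; exact hpost α ih⟩

/-!
Since composition is ω-continuous, `x ↦ x · α` is Scott-continuous and Kleene's fixed point
theorem makes `⋁ₙ ⊥ · αⁿ` its least fixed point. For uniformity, `x ↦ x · h♯` is continuous,
strict by hypothesis, and intertwines `x ↦ x · β` with `x ↦ x · α`; so it maps each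
approximant `⊥ · βⁿ` to `⊥ · αⁿ`, hence the supremum to the supremum.
-/

namespace OmegaCompletePartialOrder.fixedPoints

variable {α β : Type*} [OmegaCompletePartialOrder α] [OrderBot α]
  [OmegaCompletePartialOrder β] [OrderBot β]

theorem map_ωSup_iterateChain_bot_of_semiconj (f : α →𝒄 β) (g : α →o α) (k : β →o β)
    (hf : f ⊥ = ⊥) (hfgk : Function.Semiconj f g k) :
    f (ωSup (iterateChain g ⊥ bot_le)) = ωSup (iterateChain k ⊥ bot_le) := by
  rw [f.continuous]
  congr 1
  ext n
  change f (g^[n] ⊥) = k^[n] ⊥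
  rw [hfgk.iterate_right n, hf]

end OmegaCompletePartialOrder.fixedPoints

open OmegaCompletePartialOrder.fixedPoints

theorem CategoryTheory.semiconj_comp_of_comm {D : Type*} [Category D] {X Y Z : D} {f : X ⟶ Y}
    {α : X ⟶ X} {β : Y ⟶ Y} (hcomm : α ≫ f = f ≫ β) :
    Function.Semiconj (fun x : Y ⟶ Z => f ≫ x) (β ≫ ·) (α ≫ ·) := by
  intro x
  simp only [← Category.assoc, hcomm]

section KleisliTrace

variable {T}
  (hpost : ∀ {X Y Z : Kleisli T} (f : X ⟶ Y), Monotone (fun g : Y ⟶ Z => f ≫ g))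
  (hpostCont : ∀ {X Y Z : Kleisli T} (f : X ⟶ Y) (c : Chain (Y ⟶ Z)),
      f ≫ ωSup c = ωSup (c.map ⟨fun g => f ≫ g, hpost f⟩))

def precompContinuousHom {X Y Z : Kleisli T} (f : X ⟶ Y) : (Y ⟶ Z) →𝒄 (X ⟶ Z) :=
  ⟨⟨fun g => f ≫ g, hpost f⟩, hpostCont f⟩

theorem traceChain_eq_iterateChain [HasInitial C] {X : Kleisli T} (α : X ⟶ X) :
    traceChain T hpost α =
      iterateChain (precompContinuousHom hpost hpostCont α).toOrderHom ⊥ bot_le :=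
  rfl

end KleisliTrace

theorem kleisli_least_fixed_point_is_uniform_trace_operator [HasInitial C]
    -- composition is ω-continuous (hence monotone) in each argument
    (hpost : ∀ {X Y Z : Kleisli T} (f : X ⟶ Y), Monotone (fun g : Y ⟶ Z => f ≫ g))
    (hpostCont : ∀ {X Y Z : Kleisli T} (f : X ⟶ Y) (c : Chain (Y ⟶ Z)),
      f ≫ ωSup c = ωSup (c.map ⟨fun g => f ≫ g, hpost f⟩))
    -- `⊥ · f♯ = ⊥` for every morphism `f` of `C`
    (hbot : ∀ {X Y : C} (f : X ⟶ Y),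
      (Kleisli.Adjunction.toKleisli T).map f ≫ (⊥ : kObj T Y ⟶ kObj T (⊥_ C)) =
        (⊥ : kObj T X ⟶ kObj T (⊥_ C))) :
    -- `tr_α := ωSup (n ↦ ⊥ · αⁿ)` is the least fixed point of `x ↦ x · α` …
    (∀ {X : Kleisli T} (α : X ⟶ X),
      α ≫ ωSup (traceChain T hpost α) = ωSup (traceChain T hpost α)) ∧
    (∀ {X : Kleisli T} (α : X ⟶ X) (s : X ⟶ kObj T (⊥_ C)),
      α ≫ s = s → ωSup (traceChain T hpost α) ≤ s) ∧
    -- … and it is uniform w.r.t. `♯ : C → Kl(T)`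
    (∀ {X Y : C} (h : X ⟶ Y) (α : kObj T X ⟶ kObj T X) (β : kObj T Y ⟶ kObj T Y),
      α ≫ (Kleisli.Adjunction.toKleisli T).map h =
          (Kleisli.Adjunction.toKleisli T).map h ≫ β →
        (Kleisli.Adjunction.toKleisli T).map h ≫ ωSup (traceChain T hpost β) =
          ωSup (traceChain T hpost α)) := by
  refine ⟨fun α => ?_, fun α s hs => ?_, fun h α β hcomm => ?_⟩
  · rw [traceChain_eq_iterateChain hpost hpostCont]
    exact ωSup_iterate_mem_fixedPoint (precompContinuousHom hpost hpostCont α) ⊥ bot_le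
  · rw [traceChain_eq_iterateChain hpost hpostCont]
    exact ωSup_iterate_le_fixedPoint (precompContinuousHom hpost hpostCont α) ⊥ bot_le hs bot_le
  · exact map_ωSup_iterateChain_bot_of_semiconj
      (precompContinuousHom hpost hpostCont ((Kleisli.Adjunction.toKleisli T).map h))
      (precompContinuousHom hpost hpostCont β).toOrderHom
      (precompContinuousHom hpost hpostCont α).toOrderHom (hbot h)
      (semiconj_comp_of_comm hcomm)
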